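/- Suppose each link performance function t_a is continuous, and let f : [0, T] → (K → ℝ) be a continuously differentiable solution of the route-choice dynamical system f'(τ) k = −J_k(f(τ)). If f(0) k ≥ 0 for all k ∈ K, then f(τ) k ≥ 0 for all k ∈ K and all τ ∈ [0, T]; i.e., trajectories cannot cross the boundary f k = 0 and route flows remain nonnegative. -/

import Mathlib

/-!
The FIFO violation of a route carries its own flow as a factor, so along a solution each route
flow obeys the scalar linear equation `y' = -y · g`, where `g(τ)` is the flow-weighted cost excess
of the route over its O-D market at time `τ`. Multiplying by the integrating factor `exp (∫ g)`
gives `f(τ) k · exp (∫₀^τ g) = f(0) k`, so the sign of each route flow never changes.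
-/

open Finset

/-- Link flow on arc `a` induced by route flows `f`. -/
noncomputable def linkFlow {A K : Type*} [Fintype K] (δ : A → K → ℝ)
    (f : K → ℝ) (a : A) : ℝ :=
  ∑ k, δ a k * f k

/-- Travel time on route `k` induced by route flows `f`. -/
noncomputable def routeTime {A K : Type*} [Fintype A] [Fintype K] (δ : A → K → ℝ)
    (t : A → ℝ → ℝ) (f : K → ℝ) (k : K) : ℝ :=
  ∑ a, t a (linkFlow δ f a) * δ a k

/-- O-D FIFO violation of route `k` at route-flow state `f`. -/
noncomputable def fifoViolation {A W K : Type*} [Fintype A] [Fintype K] [DecidableEq W]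
    (od : K → W) (δ : A → K → ℝ) (t : A → ℝ → ℝ) (f : K → ℝ) (k : K) : ℝ :=
  f k * ∑ j ∈ univ.filter (fun j => od j = od k),
    (routeTime δ t f k - routeTime δ t f j) * f j

open Set Real

section LinearODE

variable {y g : ℝ → ℝ} {a b : ℝ}

theorem mul_exp_integral_eq_of_hasDerivWithinAt (hg : ContinuousOn g (Icc a b))
    (hy : ∀ s ∈ Icc a b, HasDerivWithinAt y (-(y s * g s)) (Icc a b) s) :
    ∀ s ∈ Icc a b, y s * exp (∫ u in a..s, g u) = y a := by
  intro s hs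
  have hab : a ≤ b := hs.1.trans hs.2
  -- The fundamental theorem of calculus wants a continuous integrand on all of `ℝ`.
  set g' : ℝ → ℝ := fun u => g (projIcc a b hab u)
  have hg' : Continuous g' :=
    hg.comp_continuous (continuous_subtype_val.comp continuous_projIcc) fun u =>
      (projIcc a b hab u).2
  have hg'_eq : EqOn g' g (Icc a b) := fun u hu => by simp only [g', projIcc_of_mem hab hu]
  have hint : ∀ s ∈ Icc a b, ∫ u in a..s, g' u = ∫ u in a..s, g u := fun s hs =>
    intervalIntegral.integral_congr fun u hu => hg'_eq (uIcc_subset_Icc (left_mem_Icc.2 hab) hs hu)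
  set z : ℝ → ℝ := fun s => y s * exp (∫ u in a..s, g' u)
  have hz : ∀ s ∈ Icc a b, HasDerivWithinAt z 0 (Icc a b) s := by
    intro s hs
    have hexp := ((hg'.integral_hasStrictDerivAt a s).hasDerivAt.exp).hasDerivWithinAt
      (s := Icc a b)
    refine ((hy s hs).mul hexp).congr_deriv ?_
    rw [hg'_eq hs]
    ring
  have hz_const := constant_of_has_deriv_right_zero
    (fun s hs => (hz s hs).continuousWithinAt)
    (fun s hs =>
      (hz s (Ico_subset_Icc_self hs)).mono_of_mem_nhdsWithin (Icc_mem_nhdsGE_of_mem hs))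
    s hs
  simpa only [z, hint s hs, intervalIntegral.integral_same, exp_zero, mul_one] using hz_const

end LinearODE

section RouteChoice

variable {A W K : Type*} [Fintype A] [Fintype K] [DecidableEq W]
  (od : K → W) (δ : A → K → ℝ) (t : A → ℝ → ℝ)

noncomputable def routeCostExcess (f : K → ℝ) (k : K) : ℝ :=
  ∑ j ∈ univ.filter (fun j => od j = od k), (routeTime δ t f k - routeTime δ t f j) * f j

theorem fifoViolation_eq_mul_routeCostExcess (f : K → ℝ) (k : K) :
    fifoViolation od δ t f k = f k * routeCostExcess od δ t f k :=
  rfl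

variable {δ t}

theorem continuous_routeTime (ht : ∀ a, Continuous (t a)) (k : K) :
    Continuous fun f : K → ℝ => routeTime δ t f k := by
  unfold routeTime linkFlow
  fun_prop

theorem continuous_routeCostExcess (ht : ∀ a, Continuous (t a)) (k : K) :
    Continuous fun f : K → ℝ => routeCostExcess od δ t f k :=
  continuous_finsetSum _ fun j _ =>
    ((continuous_routeTime ht k).sub (continuous_routeTime ht j)).mul (continuous_apply j)

end RouteChoice

theorem route_flows_stay_nonneg_general {A W K : Type*} [Fintype A] [Fintype K] [DecidableEq W]
    (od : K → W) (δ : A → K → ℝ)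
    (t : A → ℝ → ℝ)
    (ht : ∀ a, Continuous (t a)) (T : ℝ) (f : ℝ → K → ℝ)
    (hsol : ∀ τ ∈ Set.Icc (0:ℝ) T,
      HasDerivWithinAt f (fun k => -fifoViolation od δ t (f τ) k) (Set.Icc 0 T) τ)
    (h0 : ∀ k, 0 ≤ f 0 k) :
    ∀ k, ∀ τ ∈ Set.Icc (0:ℝ) T, 0 ≤ f τ k := by
  intro k τ hτ
  have hf : ContinuousOn f (Icc 0 T) := fun s hs => (hsol s hs).continuousWithinAt
  have hcoef : ContinuousOn (fun s => routeCostExcess od δ t (f s) k) (Icc 0 T) :=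
    (continuous_routeCostExcess od ht k).comp_continuousOn hf
  have hflow := mul_exp_integral_eq_of_hasDerivWithinAt hcoef
    (fun s hs => by
      simpa only [fifoViolation_eq_mul_routeCostExcess] using hasDerivWithinAt_pi.1 (hsol s hs) k)
    τ hτ
  exact (mul_nonneg_iff_of_pos_right (exp_pos _)).1 (hflow ▸ h0 k)

theorem route_flows_stay_nonneg {A W K : Type*} [Fintype A] [Fintype W] [Fintype K] [DecidableEq W]
    (od : K → W) (δ : A → K → ℝ) (hδ : ∀ a k, δ a k = 0 ∨ δ a k = 1)
    (t : A → ℝ → ℝ)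
    (ht : ∀ a, Continuous (t a)) (T : ℝ) (f : ℝ → K → ℝ)
    (hC1 : ContDiffOn ℝ 1 f (Set.Icc 0 T))
    (hsol : ∀ τ ∈ Set.Icc (0:ℝ) T,
      HasDerivWithinAt f (fun k => -fifoViolation od δ t (f τ) k) (Set.Icc 0 T) τ)
    (h0 : ∀ k, 0 ≤ f 0 k) :
    ∀ k, ∀ τ ∈ Set.Icc (0:ℝ) T, 0 ≤ f τ k :=
  route_flows_stay_nonneg_general od δ t ht T f hsol h0
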